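/- arXiv:2305.01851 — 6 statements merged into one kernel-verified Lean document; each statement's English description precedes it below -/
import Mathlib

section
/- For all natural numbers i, q, t with q ≥ 3 and 1 ≤ t ≤ i, and every real number s, the identity ∑_{k=i−t}^{i−1} [ (s + (i−k)·q + (k − 2i)) · ∏_{m=1}^{q−3} (s + m − k) ] = t · ∏_{m=1}^{q−2} (s + m − i + t) holds, where the sum ranges over the integers k with i−t ≤ k ≤ i−1, all integer quantities are cast into ℝ, and an empty product equals 1 (e.g. the inner product is empty when q = 3). -/
/-!
Substituting `k = i - 1 - j` and `x = s - i`, the summand becomes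
`(x + (j + 1)(q - 1)) ∏_{m=1}^{q-3} (x + j + 1 + m)`, which is the difference `P (j + 1) - P j`
of `P j = j ∏_{m=1}^{q-2} (x + j + m)`; the sum telescopes to `P t`.
-/

open Finset

theorem Finset.prod_Icc_one_succ_eq_mul_prod_Icc_add_one {M : Type*} [CommMonoid M]
    (f : ℕ → M) (n : ℕ) :
    ∏ m ∈ Icc 1 (n + 1), f m = f 1 * ∏ m ∈ Icc 1 n, f (m + 1) := by
  induction n with
  | zero => simp
  | succ n ih => rw [prod_Icc_succ_top (by omega), ih, prod_Icc_succ_top (by omega), mul_assoc]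

lemma succ_mul_prod_Icc_add_eq (x : ℝ) (n j : ℕ) :
    ((j : ℝ) + 1) * ∏ m ∈ Icc 1 (n + 1), (x + ((j : ℝ) + 1) + m) =
      (j : ℝ) * ∏ m ∈ Icc 1 (n + 1), (x + j + m) +
        (x + ((j : ℝ) + 1) * (n + 2)) * ∏ m ∈ Icc 1 n, (x + ((j : ℝ) + 1) + m) := by
  rw [prod_Icc_succ_top (by omega), prod_Icc_one_succ_eq_mul_prod_Icc_add_one]
  push_cast
  simp only [← add_assoc, add_right_comm _ (1 : ℝ)]
  ring

lemma sum_range_mul_prod_Icc_add_eq (x : ℝ) (n t : ℕ) :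
    ∑ j ∈ range t, (x + ((j : ℝ) + 1) * (n + 2)) * ∏ m ∈ Icc 1 n, (x + ((j : ℝ) + 1) + m) =
      t * ∏ m ∈ Icc 1 (n + 1), (x + t + m) := by
  refine sum_range_induction _ (fun t : ℕ ↦ (t : ℝ) * ∏ m ∈ Icc 1 (n + 1), (x + t + m))
    (by simp) t fun j _ ↦ ?_
  push_cast
  rw [succ_mul_prod_Icc_add_eq]

theorem stmt0_general (i q t : ℕ) (hq : 3 ≤ q) (hti : t ≤ i) (s : ℝ) :
    ∑ k ∈ Finset.Ico (i - t) i,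
      ((s + ((i : ℝ) - (k : ℝ)) * (q : ℝ) + ((k : ℝ) - 2 * (i : ℝ))) *
        ∏ m ∈ Finset.Icc 1 (q - 3), (s + (m : ℝ) - (k : ℝ)))
    = (t : ℝ) * ∏ m ∈ Finset.Icc 1 (q - 2), (s + (m : ℝ) - (i : ℝ) + (t : ℝ)) := by
  obtain ⟨n, rfl⟩ : ∃ n, q = n + 3 := ⟨q - 3, by omega⟩
  rw [show n + 3 - 3 = n by omega, show n + 3 - 2 = n + 1 by omega]
  calc _ = ∑ j ∈ range t, (s - i + ((j : ℝ) + 1) * (n + 2)) *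
          ∏ m ∈ Icc 1 n, (s - i + ((j : ℝ) + 1) + m) := by
        rw [sum_Ico_eq_sum_range, Nat.sub_sub_self hti, ← sum_range_reflect]
        refine sum_congr rfl fun j hj ↦ ?_
        have hjt := mem_range.1 hj
        have hk : ((i - t + (t - 1 - j) : ℕ) : ℝ) = i - (j + 1) := by
          rw [show i - t + (t - 1 - j) = i - (j + 1) by omega, Nat.cast_sub (by omega)]
          push_cast
          ring
        rw [hk]
        push_cast
        congr 1
        · ring
        · exact prod_congr rfl fun m _ ↦ by ring
    _ = t * ∏ m ∈ Icc 1 (n + 1), (s - i + t + m) := sum_range_mul_prod_Icc_add_eq ..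
    _ = _ := congrArg _ (prod_congr rfl fun m _ ↦ by ring)

/-- For all natural numbers `i, q, t` with `q ≥ 3` and `1 ≤ t ≤ i`, and every real `s`,
∑_{k=i−t}^{i−1} (s + (i−k)q + (k − 2i)) ∏_{m=1}^{q−3} (s + m − k)
  = t ∏_{m=1}^{q−2} (s + m − i + t). -/
theorem stmt0 (i q t : ℕ) (hq : 3 ≤ q) (ht1 : 1 ≤ t) (hti : t ≤ i) (s : ℝ) :
    ∑ k ∈ Finset.Ico (i - t) i,
      ((s + ((i : ℝ) - (k : ℝ)) * (q : ℝ) + ((k : ℝ) - 2 * (i : ℝ))) *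
        ∏ m ∈ Finset.Icc 1 (q - 3), (s + (m : ℝ) - (k : ℝ)))
    = (t : ℝ) * ∏ m ∈ Finset.Icc 1 (q - 2), (s + (m : ℝ) - (i : ℝ) + (t : ℝ)) :=
  stmt0_general i q t hq hti s
end

section
/- For every natural number q ≥ 3 and every function c : Fin q → ℕ, setting s = ∑_{i} c(i), the identity ∑_{j=0}^{q−1} ∑_{k=0}^{c(j)−1} [ ((q−2)·c(j) − (q−1)·k + s) · ∏_{m=1}^{q−3} (s − k + m) ] = ∏_{m=2}^{q} (s + q − m) holds as an identity of integers, where the inner sum over k is empty when c(j) = 0 and empty products equal 1. -/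
/-!
With `P r x = x (x + 1) ⋯ (x + r - 1)` the rising factorial and `n = q - 3`, the summand for
`(j, k)` is `f k - f (k + 1)` where `f k = (c j - k) · P (n + 1) (s - k + 1)`, so the inner sum
telescopes to `c j · P (n + 1) (s + 1)`. Summing over `j` gives `s · P (n + 1) (s + 1) = P (n + 2) s`,
which is the right-hand side with its factors read in reverse order.
-/

open Finset Polynomial

section

variable {R : Type*}

theorem ascPochhammer_succ_eval_left [CommSemiring R] (n : ℕ) (x : R) :
    (ascPochhammer R (n + 1)).eval x = x * (ascPochhammer R n).eval (x + 1) := by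
  rw [ascPochhammer_succ_left, eval_mul, eval_X, eval_comp, eval_add, eval_X, eval_one]

theorem prod_Icc_one_add_eq_ascPochhammer_eval [CommSemiring R] (n : ℕ) (x : R) :
    ∏ m ∈ Icc 1 n, (x + m) = (ascPochhammer R n).eval (x + 1) := by
  induction n with
  | zero => simp
  | succ n ih =>
    rw [prod_Icc_succ_top (by omega), ih, ascPochhammer_succ_eval]
    push_cast
    ring

theorem prod_Icc_two_sub_eq_ascPochhammer_eval [CommRing R] (q : ℕ) (x : R) :
    ∏ m ∈ Icc 2 q, (x + q - m) = (ascPochhammer R (q - 1)).eval x := by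
  suffices h : ∀ (n : ℕ) (x : R),
      ∏ m ∈ Icc 2 (n + 1), (x + (n + 1 : ℕ) - m) = (ascPochhammer R n).eval x by
    cases q
    · simp
    · exact h _ x
  intro n
  induction n with
  | zero => simp
  | succ n ih =>
    intro x
    rw [prod_Icc_succ_top (by omega), ascPochhammer_succ_eval_left, ← ih, mul_comm]
    push_cast
    congr 1
    · ring
    · exact prod_congr rfl fun m _ => by ring

theorem ascPochhammer_eval_succ_sub [CommRing R] (n : ℕ) (a y : R) :
    a * (ascPochhammer R (n + 1)).eval (y + 1) - (a - 1) * (ascPochhammer R (n + 1)).eval y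
      = ((n + 1) * a + y) * (ascPochhammer R n).eval (y + 1) := by
  rw [ascPochhammer_succ_eval, ascPochhammer_succ_eval_left]
  ring

theorem sum_range_mul_ascPochhammer_eval [CommRing R] (n c : ℕ) (s : R) :
    ∑ k ∈ range c, (((n : R) + 1) * c - (n + 2) * k + s) * (ascPochhammer R n).eval (s - k + 1)
      = c * (ascPochhammer R (n + 1)).eval (s + 1) := by
  let f : ℕ → R := fun k => (c - k) * (ascPochhammer R (n + 1)).eval (s - k + 1)
  have hstep (k : ℕ) : f k - f (k + 1)
      = ((n + 1) * c - (n + 2) * k + s) * (ascPochhammer R n).eval (s - k + 1) := by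
    have := ascPochhammer_eval_succ_sub n ((c : R) - k) (s - k)
    simp only [f]
    push_cast
    rw [show s - (k + 1) + 1 = s - k by ring, show (c : R) - (k + 1) = c - k - 1 by ring, this]
    ring
  rw [← sum_congr rfl fun k _ => hstep k, sum_range_sub']
  simp [f]

end

/-- For `q ≥ 3` and `c : Fin q → ℕ` with `s = ∑ c i`,
∑_{j} ∑_{k=0}^{c j − 1} ((q−2)·c j − (q−1)·k + s) ∏_{m=1}^{q−3} (s − k + m)
  = ∏_{m=2}^{q} (s + q − m), as integers. -/
theorem stmt1 (q : ℕ) (hq : 3 ≤ q) (c : Fin q → ℕ) (s : ℕ) (hs : s = ∑ i, c i) :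
    ∑ j, ∑ k ∈ Finset.range (c j),
      ((((q : ℤ) - 2) * (c j : ℤ) - ((q : ℤ) - 1) * (k : ℤ) + (s : ℤ)) *
        ∏ m ∈ Finset.Icc 1 (q - 3), ((s : ℤ) - (k : ℤ) + (m : ℤ)))
    = ∏ m ∈ Finset.Icc 2 q, ((s : ℤ) + (q : ℤ) - (m : ℤ)) := by
  obtain ⟨n, rfl⟩ : ∃ n, q = n + 3 := ⟨q - 3, by omega⟩
  have hinner (j : Fin (n + 3)) : ∑ k ∈ range (c j),
      ((((n + 3 : ℕ) : ℤ) - 2) * (c j : ℤ) - (((n + 3 : ℕ) : ℤ) - 1) * (k : ℤ) + (s : ℤ)) *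
        ∏ m ∈ Icc 1 (n + 3 - 3), ((s : ℤ) - (k : ℤ) + (m : ℤ))
      = (c j : ℤ) * (ascPochhammer ℤ (n + 1)).eval ((s : ℤ) + 1) := by
    rw [← sum_range_mul_ascPochhammer_eval]
    refine sum_congr rfl fun k _ => ?_
    rw [Nat.add_sub_cancel, prod_Icc_one_add_eq_ascPochhammer_eval]
    push_cast
    ring
  calc _ = ∑ j, (c j : ℤ) * (ascPochhammer ℤ (n + 1)).eval ((s : ℤ) + 1) :=
        sum_congr rfl fun j _ => hinner j
    _ = (ascPochhammer ℤ (n + 2)).eval (s : ℤ) := by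
        rw [← sum_mul, ← Nat.cast_sum, ← hs, ascPochhammer_succ_eval_left (n + 1)]
    _ = _ := (prod_Icc_two_sub_eq_ascPochhammer_eval (n + 3) (s : ℤ)).symm
end

section
/- Let p be an odd prime, let k ≥ 1 and n ≥ 1 be natural numbers, and let a : Fin n → ℕ satisfy a(i) ≥ 3 for all i and ∑_{i} a(i) = k·p. Let {π_1, …, π_m} be a partition of the index set Fin n into m nonempty parts; for each part π_j set p_j = |π_j| and g_j = ∑_{i ∈ π_j} (a(i) − 1). Define the natural number V = multinomial(kp; g_1 + p_1, …, g_m + p_m) · 2^{kp + n − 3m} · ∏_{i} (a(i) − 1) · ∏_{j=1}^{m} ∏_{l=0}^{p_j − 2} (g_j + l). If p does not divide V, then every part π_j satisfies both (i) |π_j| ≤ p and (ii) p divides ∑_{i ∈ π_j} a(i). -/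
/-!
Writing `g_j + p_j = ∑_{i ∈ π_j} a(i)`, these part sums add up to `kp`. Splitting off one part,
the multinomial coefficient is a multiple of `C(kp, g_j + p_j)`, and `N C(N-1, r-1) = r C(N, r)`
shows that `p ∤ C(kp, r)` forces `p ∣ r`. If a part had more than `p` elements, its product
`∏_{l ≤ p_j - 2} (g_j + l)` would contain `p` consecutive integers, hence be divisible by `p`.
-/

open Finset

theorem Nat.Prime.dvd_of_not_dvd_choose {p N r : ℕ} (hp : p.Prime) (hN : p ∣ N)
    (h : ¬ p ∣ N.choose r) : p ∣ r := by
  obtain _ | r := r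
  · exact dvd_zero p
  obtain _ | N := N
  · simp at h
  have hdvd : p ∣ (N + 1).choose (r + 1) * (r + 1) :=
    Nat.add_one_mul_choose_eq N r ▸ hN.mul_right _
  exact (hp.dvd_mul.mp hdvd).resolve_left h

theorem Nat.Prime.dvd_of_not_dvd_multinomial {ι : Type*} [DecidableEq ι] {p : ℕ} {s : Finset ι}
    {f : ι → ℕ} {j : ι} (hp : p.Prime) (hj : j ∈ s) (hsum : p ∣ ∑ i ∈ s, f i)
    (h : ¬ p ∣ Nat.multinomial s f) : p ∣ f j := by
  rw [← insert_erase hj, Nat.multinomial_insert (notMem_erase j s), add_sum_erase s f hj] at h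
  exact hp.dvd_of_not_dvd_choose hsum fun hc => h (hc.mul_right _)

theorem Nat.dvd_prod_range_add {p c : ℕ} (s : ℕ) (hp : 0 < p) (hpc : p ≤ c) :
    p ∣ ∏ l ∈ range c, (s + l) := by
  rw [← Nat.ascFactorial_eq_prod_range]
  exact (Nat.dvd_factorial hp hpc).trans (Nat.factorial_dvd_ascFactorial s c)

theorem Finset.sum_sum_eq_sum_of_partition {ι κ M : Type*} [Fintype ι] [Fintype κ]
    [DecidableEq ι] [AddCommMonoid M] (π : κ → Finset ι)
    (hdisj : ∀ j j', j ≠ j' → Disjoint (π j) (π j')) (hcover : ∀ i, ∃ j, i ∈ π j)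
    (f : ι → M) : ∑ j, ∑ i ∈ π j, f i = ∑ i, f i := by
  have hunion : univ.biUnion π = univ :=
    eq_univ_of_forall fun i => mem_biUnion.mpr ((hcover i).imp fun j hj => ⟨mem_univ j, hj⟩)
  rw [← sum_biUnion fun j _ j' _ hjj' => hdisj j j' hjj', hunion]

theorem stmt3_general (p k n m : ℕ) (hp : p.Prime)
    (a : Fin n → ℕ) (ha : ∀ i, 3 ≤ a i) (hsum : ∑ i, a i = k * p)
    (π : Fin m → Finset (Fin n))
    (hdisj : ∀ j j', j ≠ j' → Disjoint (π j) (π j'))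
    (hcover : ∀ i, ∃ j, i ∈ π j)
    (hV : ¬ p ∣
      (Nat.multinomial Finset.univ
          (fun j : Fin m => (∑ i ∈ π j, (a i - 1)) + (π j).card) *
        2 ^ (k * p + n - 3 * m) *
        (∏ i, (a i - 1)) *
        ∏ j : Fin m, ∏ l ∈ Finset.range ((π j).card - 1),
          ((∑ i ∈ π j, (a i - 1)) + l))) :
    ∀ j : Fin m, (π j).card ≤ p ∧ p ∣ ∑ i ∈ π j, a i := by
  set g : Fin m → ℕ := fun j => ∑ i ∈ π j, (a i - 1)
  have hpart : ∀ j, g j + (π j).card = ∑ i ∈ π j, a i := fun j => by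
    rw [card_eq_sum_ones, ← sum_add_distrib]
    exact sum_congr rfl fun i _ => Nat.sub_add_cancel (by linarith [ha i])
  have hM : ¬ p ∣ Nat.multinomial univ fun j => g j + (π j).card :=
    fun h => hV (dvd_mul_of_dvd_left (dvd_mul_of_dvd_left (dvd_mul_of_dvd_left h _) _) _)
  have hP : ¬ p ∣ ∏ j, ∏ l ∈ range ((π j).card - 1), (g j + l) :=
    fun h => hV (dvd_mul_of_dvd_right h _)
  intro j
  constructor
  · by_contra! hcard
    exact hP ((Nat.dvd_prod_range_add (g j) hp.pos (Nat.le_sub_one_of_lt hcard)).trans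
      (dvd_prod_of_mem (fun j => ∏ l ∈ range ((π j).card - 1), (g j + l)) (mem_univ j)))
  · rw [← hpart]
    refine hp.dvd_of_not_dvd_multinomial (f := fun j => g j + (π j).card) (mem_univ j) ?_ hM
    simp only [hpart, sum_sum_eq_sum_of_partition π hdisj hcover, hsum]
    exact dvd_mul_left p k

/-- Let `p` be an odd prime, `k ≥ 1`, `n ≥ 1`, and `a : Fin n → ℕ` with each `a i ≥ 3` and
`∑ a i = k·p`.  Given a partition of `Fin n` into `m` nonempty parts `π j`, with
`p_j = |π j|` and `g_j = ∑_{i ∈ π j} (a i − 1)`, if `p` does not divide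
`multinomial(kp; g_1+p_1, …, g_m+p_m) · 2^{kp+n−3m} · ∏_i (a i − 1) · ∏_j ∏_{l=0}^{p_j−2} (g_j + l)`,
then every part has at most `p` elements and `p` divides the sum of `a` over each part. -/
theorem stmt3 (p k n m : ℕ) (hp : p.Prime) (hodd : Odd p) (hk : 1 ≤ k) (hn : 1 ≤ n)
    (a : Fin n → ℕ) (ha : ∀ i, 3 ≤ a i) (hsum : ∑ i, a i = k * p)
    (π : Fin m → Finset (Fin n))
    (hne : ∀ j, (π j).Nonempty)
    (hdisj : ∀ j j', j ≠ j' → Disjoint (π j) (π j'))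
    (hcover : ∀ i, ∃ j, i ∈ π j)
    (hV : ¬ p ∣
      (Nat.multinomial Finset.univ
          (fun j : Fin m => (∑ i ∈ π j, (a i - 1)) + (π j).card) *
        2 ^ (k * p + n - 3 * m) *
        (∏ i, (a i - 1)) *
        ∏ j : Fin m, ∏ l ∈ Finset.range ((π j).card - 1),
          ((∑ i ∈ π j, (a i - 1)) + l))) :
    ∀ j : Fin m, (π j).card ≤ p ∧ p ∣ ∑ i ∈ π j, a i :=
  stmt3_general p k n m hp a ha hsum π hdisj hcover hV
end

section
/- Let n ≥ 1 be a natural number and let f : Fin (2n) → ℕ satisfy f(i) ≥ 1 for all i. Set a = 1 + ∑_{i} f(i) and define g : Fin (2n) → ℕ by g(i) = f(i) + a. Then every equal-sum subset S ⊆ Fin (2n) for g satisfies |S| = n. -/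
/-!
Shifting every weight by `a > ∑ f` makes `a` dominate: a side of an equal-sum partition weighs
`k * a + r` with `r ≤ ∑ f < a`, so its number of elements `k` is the quotient of its weight by `a`.
Both sides have the same weight, hence the same number of elements.
-/

open Finset

theorem Nat.eq_of_mul_add_eq_mul_add {a x y r s : ℕ} (hr : r < a) (hs : s < a)
    (h : a * x + r = a * y + s) : x = y := by
  have ha : 0 < a := pos_of_gt hr
  calc x = (a * x + r) / a := by rw [Nat.mul_add_div ha, Nat.div_eq_of_lt hr, add_zero]
    _ = (a * y + s) / a := by rw [h]
    _ = y := by rw [Nat.mul_add_div ha, Nat.div_eq_of_lt hs, add_zero]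

theorem Finset.card_eq_card_compl_of_sum_add_eq {ι : Type*} [Fintype ι] [DecidableEq ι]
    (f : ι → ℕ) {a : ℕ} (ha : ∑ i, f i < a) {S : Finset ι}
    (hS : ∑ i ∈ S, (f i + a) = ∑ i ∈ Sᶜ, (f i + a)) : #S = #Sᶜ := by
  simp only [sum_add_distrib, sum_const, smul_eq_mul] at hS
  have hS_lt : ∑ i ∈ S, f i < a := (sum_le_sum_of_subset (subset_univ S)).trans_lt ha
  have hSc_lt : ∑ i ∈ Sᶜ, f i < a := (sum_le_sum_of_subset (subset_univ Sᶜ)).trans_lt ha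
  exact Nat.eq_of_mul_add_eq_mul_add hS_lt hSc_lt (by linarith)

theorem stmt5_general (n : ℕ) (f : Fin (2 * n) → ℕ)
    (a : ℕ) (ha : a = 1 + ∑ i, f i)
    (g : Fin (2 * n) → ℕ) (hg : ∀ i, g i = f i + a)
    (S : Finset (Fin (2 * n)))
    (hS : ∑ i ∈ S, g i = ∑ i ∈ Sᶜ, g i) :
    S.card = n := by
  have hcard : #S = #Sᶜ :=
    card_eq_card_compl_of_sum_add_eq f (by omega : ∑ i, f i < a) (by simpa only [hg] using hS)
  have htotal : #S + #Sᶜ = 2 * n := by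
    rw [card_add_card_compl, Fintype.card_fin]
  omega

/-- Let `n ≥ 1` and `f : Fin (2n) → ℕ` with `f i ≥ 1` for all `i`.  Set `a = 1 + ∑ f i` and
`g i = f i + a`.  Then every subset `S` with `∑_{i ∈ S} g i = ∑_{i ∉ S} g i` has `|S| = n`. -/
theorem stmt5 (n : ℕ) (hn : 1 ≤ n) (f : Fin (2 * n) → ℕ) (hf : ∀ i, 1 ≤ f i)
    (a : ℕ) (ha : a = 1 + ∑ i, f i)
    (g : Fin (2 * n) → ℕ) (hg : ∀ i, g i = f i + a)
    (S : Finset (Fin (2 * n)))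
    (hS : ∑ i ∈ S, g i = ∑ i ∈ Sᶜ, g i) :
    S.card = n :=
  stmt5_general n f a ha g hg S hS
end

section
/- Let n ≥ 1 be a natural number and let f : Fin (2n) → ℕ satisfy f(i) ≥ 1 for all i. Set a = 1 + ∑_{i} f(i), define g : Fin (2n) → ℕ by g(i) = f(i) + a, set b = ∑_{i} g(i), and let c be a natural number with c > b. Define ĝ : Fin (2n+2) → ℕ by ĝ(i) = g(i) for the first 2n indices and ĝ(i) = c for the remaining two indices. Then: (i) every equal-sum subset S ⊆ Fin (2n+2) for ĝ has |S| = n + 1 and contains exactly one of the two indices of value c; and (ii) the number of equal-sum subsets for ĝ equals twice the number of equal-sum subsets for g. -/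
/-!
Each weight `g i = f i + a` is a multiple of `a` plus a remainder, and all remainders together
stay below `a`; likewise every sum of `g`-weights stays below `c`. Reading an equal-sum equation
as "remainder + quotient * modulus" on both sides (uniqueness of division with remainder), it
splits into an equation between the small parts and one between the numbers of large weights on
the two sides. So an equal-sum subset of `g` has `n` elements, an equal-sum subset of `gh` takes
exactly one copy of `c` together with an equal-sum subset of `g`, and conversely each equal-sum
subset of `g` extends in exactly two ways.
-/

open Finset

theorem Nat.eq_and_eq_of_add_mul_eq_add_mul {x y k l c : ℕ} (hx : x < c) (hy : y < c)
    (h : x + k * c = y + l * c) : x = y ∧ k = l := by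
  have hc : 0 < c := by omega
  have hmod := congrArg (· % c) h
  have hdiv := congrArg (· / c) h
  simp only [Nat.add_mul_mod_self_right, Nat.mod_eq_of_lt hx, Nat.mod_eq_of_lt hy] at hmod
  simp only [Nat.add_mul_div_right _ _ hc, Nat.div_eq_of_lt hx, Nat.div_eq_of_lt hy] at hdiv
  omega

section EqualSum

variable {α β : Type*} [Fintype α] [DecidableEq α] [Fintype β] [DecidableEq β]

-- An `abbrev`, so that `Finset.filter` finds the decidability of the underlying equation.
abbrev IsEqualSum (w : α → ℕ) (S : Finset α) : Prop :=
  ∑ i ∈ S, w i = ∑ i ∈ Sᶜ, w i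

theorem isEqualSum_map_equiv (e : α ≃ β) (w : β → ℕ) (S : Finset α) :
    IsEqualSum w (S.map e.toEmbedding) ↔ IsEqualSum (w ∘ e) S := by
  have hcompl : (S.map e.toEmbedding)ᶜ = Sᶜ.map e.toEmbedding := by
    ext x
    obtain ⟨y, rfl⟩ := e.surjective x
    simp
  simp only [IsEqualSum, hcompl, sum_map, Equiv.coe_toEmbedding, Function.comp_apply]

theorem card_filter_isEqualSum_comp_equiv (e : α ≃ β) (w : β → ℕ) :
    #{S | IsEqualSum (w ∘ e) S} = #{S | IsEqualSum w S} :=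
  card_equiv e.finsetCongr fun S => by simp [isEqualSum_map_equiv]

theorem IsEqualSum.card_eq_card_compl {w f : α → ℕ} {a : ℕ} (hw : ∀ i, w i = f i + a)
    (ha : ∑ i, f i < a) {S : Finset α} (hS : IsEqualSum w S) : #S = #Sᶜ := by
  have hsum (T : Finset α) : ∑ i ∈ T, w i = ∑ i ∈ T, f i + #T * a := by
    simp only [hw, sum_add_distrib, sum_const, smul_eq_mul]
  have hlt (T : Finset α) : ∑ i ∈ T, f i < a :=
    (sum_le_sum_of_subset (subset_univ T)).trans_lt ha
  rw [IsEqualSum, hsum, hsum] at hS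
  exact (Nat.eq_and_eq_of_add_mul_eq_add_mul (hlt S) (hlt Sᶜ) hS).2

theorem Finset.toLeft_compl (S : Finset (α ⊕ β)) : Sᶜ.toLeft = S.toLeftᶜ := by
  ext; simp

theorem Finset.toRight_compl (S : Finset (α ⊕ β)) : Sᶜ.toRight = S.toRightᶜ := by
  ext; simp

theorem isEqualSum_sumElim_const_iff {w : α → ℕ} {c : ℕ} (hc : ∑ i, w i < c)
    (S : Finset (α ⊕ β)) :
    IsEqualSum (Sum.elim w fun _ => c) S ↔ IsEqualSum w S.toLeft ∧ #S.toRight = #S.toRightᶜ := by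
  have hlt (T : Finset α) : ∑ i ∈ T, w i < c :=
    (sum_le_sum_of_subset (subset_univ T)).trans_lt hc
  simp only [IsEqualSum, sum_sum_eq_sum_toLeft_add_sum_toRight, Sum.elim_inl, Sum.elim_inr,
    sum_const, smul_eq_mul, toLeft_compl, toRight_compl]
  constructor
  · exact fun h => Nat.eq_and_eq_of_add_mul_eq_add_mul (hlt _) (hlt _) h
  · rintro ⟨hl, hr⟩
    rw [hl, hr]

theorem card_filter_isEqualSum_sumElim_const {w : α → ℕ} {c : ℕ} (hc : ∑ i, w i < c) :
    #{S : Finset (α ⊕ β) | IsEqualSum (Sum.elim w fun _ => c) S} =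
      #{U | IsEqualSum w U} * #{V : Finset β | #V = #Vᶜ} := by
  rw [← card_product, ← filter_product, univ_product_univ]
  exact card_equiv sumEquiv.toEquiv fun S => by simp [isEqualSum_sumElim_const_iff hc]

end EqualSum

theorem Fin.card_filter_card_eq_card_compl_two : #{V : Finset (Fin 2) | #V = #Vᶜ} = 2 := by
  decide

theorem Fin.zero_mem_iff_one_notMem_of_card_eq_card_compl {V : Finset (Fin 2)}
    (hV : #V = #Vᶜ) : 0 ∈ V ↔ 1 ∉ V := by
  revert V; decide

/-- Let `n ≥ 1`, `f : Fin (2n) → ℕ` with `f i ≥ 1`, `a = 1 + ∑ f i`, `g i = f i + a`,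
`b = ∑ g i`, and `c > b`.  Define `gh : Fin (2n+2) → ℕ` agreeing with `g` on the first `2n`
indices and equal to `c` on the last two.  Then (i) every equal-sum subset `S` for `gh` has
`|S| = n+1` and contains exactly one of the two indices of value `c`, and (ii) the number of
equal-sum subsets for `gh` is twice the number of equal-sum subsets for `g`. -/
theorem stmt6 (n : ℕ) (f : Fin (2 * n) → ℕ)
    (a : ℕ) (ha : a = 1 + ∑ i, f i)
    (g : Fin (2 * n) → ℕ) (hg : ∀ i, g i = f i + a)
    (b : ℕ) (hb : b = ∑ i, g i)
    (c : ℕ) (hc : b < c)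
    (gh : Fin (2 * n + 2) → ℕ)
    (hgh : ∀ i : Fin (2 * n + 2),
      gh i = if h : (i : ℕ) < 2 * n then g ⟨i, h⟩ else c) :
    (∀ S : Finset (Fin (2 * n + 2)), ∑ i ∈ S, gh i = ∑ i ∈ Sᶜ, gh i →
      S.card = n + 1 ∧
        ((⟨2 * n, by omega⟩ : Fin (2 * n + 2)) ∈ S ↔
          (⟨2 * n + 1, by omega⟩ : Fin (2 * n + 2)) ∉ S)) ∧
    (Finset.univ.filter
        (fun S : Finset (Fin (2 * n + 2)) => ∑ i ∈ S, gh i = ∑ i ∈ Sᶜ, gh i)).card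
      = 2 * (Finset.univ.filter
          (fun S : Finset (Fin (2 * n)) => ∑ i ∈ S, g i = ∑ i ∈ Sᶜ, g i)).card := by
  set e : Fin (2 * n) ⊕ Fin 2 ≃ Fin (2 * n + 2) := finSumFinEquiv
  have hge : gh ∘ e = Sum.elim g fun _ => c := by
    funext x
    rcases x with i | j
    · simp [e, hgh, i.isLt]
    · simp [e, hgh]
  have hgc : ∑ i, g i < c := hb ▸ hc
  have hbal {U : Finset (Fin (2 * n))} (hU : IsEqualSum g U) : #U = n := by
    have hU' := hU.card_eq_card_compl hg (by omega)
    rw [card_compl, Fintype.card_fin] at hU'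
    omega
  refine ⟨fun S hS => ?_, ?_⟩
  · obtain ⟨T, rfl⟩ : ∃ T, S = T.map e.toEmbedding :=
      ⟨e.finsetCongr.symm S, (e.finsetCongr.apply_symm_apply S).symm⟩
    change IsEqualSum gh _ at hS
    rw [isEqualSum_map_equiv, hge, isEqualSum_sumElim_const_iff hgc] at hS
    obtain ⟨hl, hr⟩ := hS
    have hr1 : #T.toRight = 1 := by
      rw [card_compl, Fintype.card_fin] at hr
      omega
    have h0 : (⟨2 * n, by omega⟩ : Fin (2 * n + 2)) = e.toEmbedding (.inr 0) := rfl
    have h1 : (⟨2 * n + 1, by omega⟩ : Fin (2 * n + 2)) = e.toEmbedding (.inr 1) := rfl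
    rw [card_map, ← card_toLeft_add_card_toRight, hbal hl, hr1, h0, h1, mem_map', mem_map',
      ← mem_toRight, ← mem_toRight]
    exact ⟨rfl, Fin.zero_mem_iff_one_notMem_of_card_eq_card_compl hr⟩
  · change #{S | IsEqualSum gh S} = 2 * #{S | IsEqualSum g S}
    rw [← card_filter_isEqualSum_comp_equiv e, hge, card_filter_isEqualSum_sumElim_const hgc,
      Fin.card_filter_card_eq_card_compl_two, mul_comm]
end

section
/- Let n ≥ 1 be a natural number and let f : Fin n → ℕ satisfy f(i) ≥ 1 for all i; set t = ∑_{i} f(i). Define f_0 : Fin (n+2) → ℕ by f_0(i) = f(i) for the first n indices and f_0(i) = t for the remaining two indices. Then the number of subsets S ⊆ Fin (n+2) with 2|S| = n + 2 that are equal-sum subsets for f_0 equals twice the number of subsets S ⊆ Fin n with 2|S| = n that are equal-sum subsets for f. -/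
/-!
The total weight of `f₀` is `3t` with `t > 0`, so an equal-sum subset has weight `3t/2` and
therefore contains exactly one of the two adjoined copies of `t`. Removing it leaves a subset of
the original indices with weight `t/2` and half the size; conversely each equal partition of `f`
extends by either copy, which gives the factor `2`.
-/

open Finset

section EqualPartition

variable {α β : Type*} [Fintype α] [DecidableEq α] [Fintype β] [DecidableEq β]

def IsEqualPartition (f : α → ℕ) (S : Finset α) : Prop :=
  2 * #S = Fintype.card α ∧ ∑ i ∈ S, f i = ∑ i ∈ Sᶜ, f i

instance (f : α → ℕ) : DecidablePred (IsEqualPartition f) :=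
  fun _ => inferInstanceAs (Decidable (_ ∧ _))

def equalPartitionCount (f : α → ℕ) : ℕ :=
  #{S | IsEqualPartition f S}

theorem isEqualPartition_iff (f : α → ℕ) (S : Finset α) :
    IsEqualPartition f S ↔ 2 * #S = Fintype.card α ∧ 2 * ∑ i ∈ S, f i = ∑ i, f i := by
  rw [IsEqualPartition, ← sum_add_sum_compl S f]
  omega

theorem isEqualPartition_map_equiv (e : α ≃ β) (g : β → ℕ) (S : Finset α) :
    IsEqualPartition g (S.map e.toEmbedding) ↔ IsEqualPartition (g ∘ e) S := by
  simp only [isEqualPartition_iff, card_map, sum_map, Equiv.coe_toEmbedding,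
    Fintype.card_congr e, Function.comp_apply, e.sum_comp g]

theorem equalPartitionCount_comp_equiv (e : α ≃ β) (g : β → ℕ) :
    equalPartitionCount (g ∘ e) = equalPartitionCount g :=
  card_equiv e.finsetCongr fun S => by
    simp [Equiv.finsetCongr_apply, isEqualPartition_map_equiv]

theorem isEqualPartition_sumElim_disjSum_iff (f : α → ℕ) (hf : 0 < ∑ i, f i)
    (T : Finset α) (U : Finset (Fin 2)) :
    IsEqualPartition (Sum.elim f fun _ : Fin 2 => ∑ i, f i) (T.disjSum U) ↔
      IsEqualPartition f T ∧ #U = 1 := by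
  have hT : ∑ i ∈ T, f i ≤ ∑ i, f i := sum_le_univ_sum_of_nonneg fun _ => Nat.zero_le _
  have hU : #U ≤ 2 := by simpa using card_le_univ U
  simp only [isEqualPartition_iff, card_disjSum, sum_disjSum, Fintype.sum_sum_type,
    Sum.elim_inl, Sum.elim_inr, sum_const, smul_eq_mul, Fintype.card_sum, Fintype.card_fin,
    card_univ]
  interval_cases #U <;> omega

theorem equalPartitionCount_sumElim (f : α → ℕ) (hf : 0 < ∑ i, f i) :
    equalPartitionCount (Sum.elim f fun _ : Fin 2 => ∑ i, f i) = 2 * equalPartitionCount f := by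
  have hsplit : equalPartitionCount (Sum.elim f fun _ : Fin 2 => ∑ i, f i) =
      #(univ.filter (IsEqualPartition f) ×ˢ powersetCard 1 (univ : Finset (Fin 2))) :=
    card_equiv sumEquiv.toEquiv fun S => by
      rw [← toLeft_disjSum_toRight (u := S)]
      simp [isEqualPartition_sumElim_disjSum_iff f hf]
  rw [hsplit, card_product, card_powersetCard, card_univ, Fintype.card_fin, Nat.choose_one_right,
    equalPartitionCount, mul_comm]

end EqualPartition

/-- Let `n ≥ 1`, `f : Fin n → ℕ` with `f i ≥ 1`, and `t = ∑ f i`.  Define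
`f0 : Fin (n+2) → ℕ` agreeing with `f` on the first `n` indices and equal to `t` on the last
two.  Then the number of subsets `S` with `2|S| = n+2` which are equal-sum for `f0` is twice
the number of subsets `S ⊆ Fin n` with `2|S| = n` which are equal-sum for `f`. -/
theorem stmt7 (n : ℕ) (hn : 1 ≤ n) (f : Fin n → ℕ) (hf : ∀ i, 1 ≤ f i)
    (t : ℕ) (ht : t = ∑ i, f i)
    (f0 : Fin (n + 2) → ℕ)
    (hf0 : ∀ i : Fin (n + 2), f0 i = if h : (i : ℕ) < n then f ⟨i, h⟩ else t) :
    (Finset.univ.filter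
        (fun S : Finset (Fin (n + 2)) =>
          2 * S.card = n + 2 ∧ ∑ i ∈ S, f0 i = ∑ i ∈ Sᶜ, f0 i)).card
      = 2 * (Finset.univ.filter
          (fun S : Finset (Fin n) =>
            2 * S.card = n ∧ ∑ i ∈ S, f i = ∑ i ∈ Sᶜ, f i)).card := by
  have ht_pos : 0 < ∑ i, f i :=
    (hf ⟨0, hn⟩).trans (single_le_sum (fun _ _ => Nat.zero_le _) (mem_univ _))
  have hf0_comp : f0 ∘ finSumFinEquiv = Sum.elim f fun _ : Fin 2 => ∑ i, f i := by
    ext (i | j) <;> simp [hf0, ht]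
  have hcount := equalPartitionCount_comp_equiv finSumFinEquiv f0
  rw [hf0_comp, equalPartitionCount_sumElim f ht_pos] at hcount
  simpa [equalPartitionCount, IsEqualPartition] using hcount.symm
end
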